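/- Weber's second exponential integral: for real s > 0, real r₁, r₂ > 0, and integer ν ≥ 0, ∫_0^∞ e^{-sλ²}·J_ν(λr₁)·J_ν(λr₂)·λ dλ = (1/(2s))·exp(-(r₁² + r₂²)/(4s))·I_ν(r₁r₂/(2s)). -/

import Mathlib

open MeasureTheory

/-- The Bessel function of the first kind of real order `ν`, defined by its power
series (for `x ≥ 0`, using real powers). -/
noncomputable def besselJ (ν x : ℝ) : ℝ :=
  ∑' j : ℕ, (-1 : ℝ) ^ j / (j.factorial * Real.Gamma (ν + j + 1)) *
    (x / 2) ^ (ν + 2 * (j : ℝ))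

/-- The modified Bessel function of the first kind of real order `ν`. -/
noncomputable def besselI (ν x : ℝ) : ℝ :=
  ∑' j : ℕ, 1 / (j.factorial * Real.Gamma (ν + j + 1)) * (x / 2) ^ (ν + 2 * (j : ℝ))

/-!
Expanding both Bessel functions in their power series turns the integrand into a double series
of Gaussian moments `∫₀^∞ e^{-sλ²} λ^{2n+1} dλ = n! / (2 s^{n+1})`. With `x = r₁²/(4s)` and
`y = r₂²/(4s)` the integrated series is
`(1/(2s)) (r₁r₂/(4s))^ν ∑_{j,k} (-x)^j (-y)^k (ν+j+k)! / (j! k! (ν+j)! (ν+k)!)`,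
and multiplying out `e^{-x} e^{-y} ∑_m (xy)^m / (m! (ν+m)!)` gives the same double series: the
coefficient of `x^j y^k` is a Chu–Vandermonde sum. The same identity at `(|x|, |y|)` shows that
the series converges absolutely, which justifies integrating termwise.
-/

open Real Set
open scoped Nat

noncomputable def besselClifford (ν : ℕ) (z : ℝ) : ℝ :=
  ∑' m : ℕ, z ^ m / (m ! * (ν + m)! : ℝ)

lemma summable_norm_besselClifford_term (ν : ℕ) (z : ℝ) :
    Summable fun m : ℕ => ‖z ^ m / (m ! * (ν + m)! : ℝ)‖ := by
  refine .of_nonneg_of_le (fun _ => norm_nonneg _) (fun m => ?_) (summable_pow_div_factorial |z|)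
  rw [norm_div, norm_pow, norm_eq_abs, norm_of_nonneg (by positivity)]
  gcongr
  exact le_mul_of_one_le_right (by positivity) (mod_cast (ν + m).factorial_pos)

lemma hasSum_besselClifford (ν : ℕ) (z : ℝ) :
    HasSum (fun m : ℕ => z ^ m / (m ! * (ν + m)! : ℝ)) (besselClifford ν z) :=
  (summable_norm_besselClifford_term ν z).of_norm.hasSum

lemma rpow_div_factorial_mul_Gamma (ν j : ℕ) (t : ℝ) :
    (t / 2) ^ ((ν : ℝ) + 2 * (j : ℝ)) / (j ! * Gamma (ν + j + 1)) =
      (t / 2) ^ ν * (((t / 2) ^ 2) ^ j / (j ! * (ν + j)!)) := by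
  rw [show (ν : ℝ) + j + 1 = ((ν + j : ℕ) : ℝ) + 1 by push_cast; ring, Gamma_nat_eq_factorial,
    show (ν : ℝ) + 2 * (j : ℝ) = ((ν + 2 * j : ℕ) : ℝ) by push_cast; ring, rpow_natCast,
    pow_add, pow_mul]
  ring

lemma besselJ_natCast (ν : ℕ) (t : ℝ) :
    besselJ ν t = (t / 2) ^ ν * besselClifford ν (-(t / 2) ^ 2) := by
  rw [besselJ, besselClifford, ← tsum_mul_left]
  refine tsum_congr fun j => ?_
  rw [div_mul_eq_mul_div, mul_div_assoc, rpow_div_factorial_mul_Gamma, neg_pow ((t / 2) ^ 2)]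
  ring

lemma besselI_natCast (ν : ℕ) (t : ℝ) :
    besselI ν t = (t / 2) ^ ν * besselClifford ν ((t / 2) ^ 2) := by
  rw [besselI, besselClifford, ← tsum_mul_left]
  exact tsum_congr fun j => by rw [one_div_mul_eq_div, rpow_div_factorial_mul_Gamma]

lemma integrableOn_exp_neg_mul_sq_mul_pow {s : ℝ} (hs : 0 < s) (n : ℕ) :
    IntegrableOn (fun l : ℝ => exp (-s * l ^ 2) * l ^ n) (Ioi 0) := by
  have hn : (-1 : ℝ) < n := by linarith [n.cast_nonneg (α := ℝ)]
  refine (integrableOn_rpow_mul_exp_neg_mul_sq hs hn).congr_fun (fun l _ => ?_) measurableSet_Ioi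
  simp only [rpow_natCast, mul_comm]

lemma integral_exp_neg_mul_sq_mul_pow_odd {s : ℝ} (hs : 0 < s) (n : ℕ) :
    ∫ l in Ioi (0 : ℝ), exp (-s * l ^ 2) * l ^ (2 * n + 1) = n ! / (2 * s ^ (n + 1)) := by
  have h := integral_rpow_mul_exp_neg_mul_rpow (p := 2) (q := ((2 * n + 1 : ℕ) : ℝ)) two_pos
    (by linarith [(2 * n + 1).cast_nonneg (α := ℝ)]) hs
  simp only [rpow_natCast, rpow_two] at h
  rw [show ((((2 * n + 1 : ℕ) : ℝ)) + 1) / 2 = n + 1 by push_cast; ring,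
    show -(((2 * n + 1 : ℕ) : ℝ) + 1) / 2 = -((n + 1 : ℕ) : ℝ) by push_cast; ring,
    Gamma_nat_eq_factorial, rpow_neg hs.le, rpow_natCast] at h
  simp_rw [mul_comm (exp _)]
  rw [h]
  field_simp

lemma integral_tsum_mul_exp_neg_mul_sq_mul_pow_odd {ι : Type*} [Countable ι] {s : ℝ}
    (hs : 0 < s) (c : ι → ℝ) (n : ι → ℕ)
    (hc : Summable fun i => ‖c i * ((n i)! / (2 * s ^ (n i + 1)))‖) :
    ∫ l in Ioi (0 : ℝ), ∑' i, c i * (exp (-s * l ^ 2) * l ^ (2 * n i + 1)) =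
      ∑' i, c i * ((n i)! / (2 * s ^ (n i + 1))) := by
  have hint (i : ι) := (integrableOn_exp_neg_mul_sq_mul_pow hs (2 * n i + 1)).const_mul (c i)
  have hnorm (i : ι) : ∫ l in Ioi (0 : ℝ), ‖c i * (exp (-s * l ^ 2) * l ^ (2 * n i + 1))‖ =
      ‖c i * ((n i)! / (2 * s ^ (n i + 1)))‖ := by
    calc ∫ l in Ioi (0 : ℝ), ‖c i * (exp (-s * l ^ 2) * l ^ (2 * n i + 1))‖
        = ∫ l in Ioi (0 : ℝ), ‖c i‖ * (exp (-s * l ^ 2) * l ^ (2 * n i + 1)) :=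
          setIntegral_congr_fun measurableSet_Ioi fun l (hl : 0 < l) => by
            rw [norm_mul, norm_of_nonneg (mul_nonneg (exp_pos _).le (pow_nonneg hl.le _))]
      _ = ‖c i * ((n i)! / (2 * s ^ (n i + 1)))‖ := by
          rw [integral_const_mul, integral_exp_neg_mul_sq_mul_pow_odd hs, norm_mul,
            norm_of_nonneg (r := (n i)! / (2 * s ^ (n i + 1))) (by positivity)]
  rw [← integral_tsum_of_summable_integral_norm hint (by simpa only [hnorm] using hc)]
  exact tsum_congr fun i => by rw [integral_const_mul, integral_exp_neg_mul_sq_mul_pow_odd hs]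

lemma exp_mul_besselJ_mul_besselJ_mul_eq_tsum (ν : ℕ) (s r₁ r₂ l : ℝ) :
    exp (-s * l ^ 2) * besselJ ν (l * r₁) * besselJ ν (l * r₂) * l =
      ∑' p : ℕ × ℕ, (r₁ / 2 * (r₂ / 2)) ^ ν *
        ((-(r₁ / 2) ^ 2) ^ p.1 / (p.1 ! * (ν + p.1)! : ℝ) *
          ((-(r₂ / 2) ^ 2) ^ p.2 / (p.2 ! * (ν + p.2)! : ℝ))) *
        (exp (-s * l ^ 2) * l ^ (2 * (ν + p.1 + p.2) + 1)) := by
  rw [besselJ_natCast, besselJ_natCast, besselClifford, besselClifford,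
    show ∀ a b c d X Y : ℝ, a * (b * X) * (c * Y) * d = a * b * c * d * (X * Y) by
      intros; ring,
    tsum_mul_tsum_of_summable_norm (summable_norm_besselClifford_term ν _)
      (summable_norm_besselClifford_term ν _), ← tsum_mul_left]
  refine tsum_congr fun p => ?_
  rw [mul_div_assoc l r₁, mul_div_assoc l r₂]
  generalize r₁ / 2 = a
  generalize r₂ / 2 = b
  ring

lemma sum_range_inv_factorial_vandermonde (ν j k : ℕ) :
    ∑ m ∈ Finset.range (min j k + 1), (1 / ((j - m)! * (k - m)! * m ! * (ν + m)!) : ℝ) =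
      (ν + j + k)! / (j ! * k ! * (ν + j)! * (ν + k)!) := by
  have hchoose : ∀ m ∈ Finset.range (min j k + 1),
      (1 / ((j - m)! * (k - m)! * m ! * (ν + m)!) : ℝ) =
        (k.choose m * (ν + j).choose (j - m) : ℕ) / (k ! * (ν + j)!) := by
    intro m hm
    simp only [Finset.mem_range, Nat.lt_succ_iff, le_min_iff] at hm
    rw [Nat.cast_mul, Nat.cast_choose ℝ hm.2, Nat.cast_choose ℝ (by omega : j - m ≤ ν + j),
      show ν + j - (j - m) = ν + m by omega]
    field_simp
  have hvandermonde : ∑ m ∈ Finset.range (min j k + 1), k.choose m * (ν + j).choose (j - m) =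
      (ν + j + k).choose j := by
    rw [show ν + j + k = k + (ν + j) by ring, Nat.add_choose_eq,
      Finset.Nat.sum_antidiagonal_eq_sum_range_succ_mk]
    refine Finset.sum_subset (fun m hm => ?_) (fun m hm hmin => ?_)
    · simp only [Finset.mem_range] at hm ⊢; omega
    · simp only [Finset.mem_range] at hm hmin
      rw [Nat.choose_eq_zero_of_lt (by omega), zero_mul]
  rw [Finset.sum_congr rfl hchoose, ← Finset.sum_div, ← Nat.cast_sum, hvandermonde,
    Nat.cast_choose ℝ (by omega : j ≤ ν + j + k), show ν + j + k - j = ν + k by omega]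
  field_simp

noncomputable def weberTerm (ν : ℕ) (x y : ℝ) (p : ℕ × ℕ) : ℝ :=
  x ^ p.1 * y ^ p.2 * ((ν + p.1 + p.2)! / (p.1 ! * p.2 ! * (ν + p.1)! * (ν + p.2)!))

lemma abs_weberTerm (ν : ℕ) (x y : ℝ) (p : ℕ × ℕ) :
    |weberTerm ν x y p| = weberTerm ν |x| |y| p := by
  simp only [weberTerm, abs_mul, abs_pow, abs_div, Nat.abs_cast]

lemma weberTerm_eq_sum_range (ν : ℕ) (x y : ℝ) (j k : ℕ) :
    weberTerm ν x y (j, k) = ∑ m ∈ Finset.range (min j k + 1),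
      x ^ (j - m) / (j - m)! * (y ^ (k - m) / (k - m)!) * ((x * y) ^ m / (m ! * (ν + m)!)) := by
  have hterm : ∀ m ∈ Finset.range (min j k + 1),
      x ^ (j - m) / (j - m)! * (y ^ (k - m) / (k - m)!) * ((x * y) ^ m / (m ! * (ν + m)!)) =
        x ^ j * y ^ k * (1 / ((j - m)! * (k - m)! * m ! * (ν + m)!)) := by
    intro m hm
    obtain ⟨a, rfl⟩ : ∃ a, j = a + m := ⟨j - m, by simp only [Finset.mem_range] at hm; omega⟩
    obtain ⟨b, rfl⟩ : ∃ b, k = b + m := ⟨k - m, by simp only [Finset.mem_range] at hm; omega⟩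
    simp only [Nat.add_sub_cancel]
    ring
  rw [Finset.sum_congr rfl hterm, ← Finset.mul_sum, sum_range_inv_factorial_vandermonde, weberTerm]

lemma hasSum_weberTerm (ν : ℕ) (x y : ℝ) :
    HasSum (weberTerm ν x y) (exp x * exp y * besselClifford ν (x * y)) := by
  have hexp (t : ℝ) : HasSum (fun n : ℕ => t ^ n / n !) (exp t) := by
    simpa only [exp_eq_exp_ℝ] using NormedSpace.expSeries_div_hasSum_exp t
  have hx := NormedSpace.norm_expSeries_div_summable x
  have hy := NormedSpace.norm_expSeries_div_summable y
  have hxy := summable_mul_of_summable_norm hx hy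
  have hxyz := summable_mul_of_summable_norm (hx.mul_norm hy)
    (summable_norm_besselClifford_term ν (x * y))
  have hT := ((hexp x).mul (hexp y) hxy).mul (hasSum_besselClifford ν (x * y)) hxyz
  -- Reindex by `((a, b), m) ↦ ((a + m, b + m), m)`: the fibre over `(j, k)` is then the
  -- coefficient of `x ^ j * y ^ k`, a Vandermonde sum.
  let shift : (ℕ × ℕ) × ℕ → (ℕ × ℕ) × ℕ := fun q => ((q.1.1 + q.2, q.1.2 + q.2), q.2)
  let F : (ℕ × ℕ) × ℕ → ℝ := fun q => if q.2 ≤ q.1.1 ∧ q.2 ≤ q.1.2 then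
    x ^ (q.1.1 - q.2) / (q.1.1 - q.2)! * (y ^ (q.1.2 - q.2) / (q.1.2 - q.2)!) *
      ((x * y) ^ q.2 / (q.2 ! * (ν + q.2)!)) else 0
  have hshift : Function.Injective shift := by
    rintro ⟨⟨a, b⟩, m⟩ ⟨⟨a', b'⟩, m'⟩ h
    simp only [shift, Prod.mk.injEq] at h
    ext <;> simp only <;> omega
  have hF0 : ∀ q ∉ range shift, F q = 0 := by
    rintro ⟨⟨j, k⟩, m⟩ hq
    refine if_neg fun (hm : m ≤ j ∧ m ≤ k) => hq ⟨((j - m, k - m), m), ?_⟩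
    simp only [shift, Prod.mk.injEq, and_true]
    omega
  have hF : HasSum F (exp x * exp y * besselClifford ν (x * y)) := by
    refine (hshift.hasSum_iff hF0).mp (hT.congr_fun fun q => ?_)
    simp only [F, shift, Function.comp_apply, Nat.le_add_left, and_self, if_true,
      Nat.add_sub_cancel]
  refine hF.prod_fiberwise fun p => ?_
  obtain ⟨j, k⟩ := p
  have hfiber : ∀ m ∈ Finset.range (min j k + 1), F ((j, k), m) =
      x ^ (j - m) / (j - m)! * (y ^ (k - m) / (k - m)!) * ((x * y) ^ m / (m ! * (ν + m)!)) :=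
    fun m hm => if_pos (show m ≤ j ∧ m ≤ k by simp only [Finset.mem_range] at hm; omega)
  rw [weberTerm_eq_sum_range, ← Finset.sum_congr rfl hfiber]
  exact hasSum_sum_of_ne_finset_zero fun m hm =>
    if_neg (show ¬(m ≤ j ∧ m ≤ k) by simp only [Finset.mem_range] at hm; omega)

lemma summable_norm_weberTerm (ν : ℕ) (x y : ℝ) : Summable fun p => ‖weberTerm ν x y p‖ := by
  simpa only [norm_eq_abs, abs_weberTerm] using (hasSum_weberTerm ν |x| |y|).summable

lemma besselJ_coeff_mul_moment_eq_weberTerm (ν : ℕ) {s : ℝ} (hs : s ≠ 0) (r₁ r₂ : ℝ)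
    (p : ℕ × ℕ) :
    (r₁ / 2 * (r₂ / 2)) ^ ν * ((-(r₁ / 2) ^ 2) ^ p.1 / (p.1 ! * (ν + p.1)! : ℝ) *
        ((-(r₂ / 2) ^ 2) ^ p.2 / (p.2 ! * (ν + p.2)! : ℝ))) *
      ((ν + p.1 + p.2)! / (2 * s ^ (ν + p.1 + p.2 + 1))) =
    1 / (2 * s) * (r₁ * r₂ / (4 * s)) ^ ν *
      weberTerm ν (-(r₁ ^ 2 / (4 * s))) (-(r₂ ^ 2 / (4 * s))) p := by
  rw [show r₁ ^ 2 / (4 * s) = (r₁ / 2) ^ 2 / s by ring,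
    show r₂ ^ 2 / (4 * s) = (r₂ / 2) ^ 2 / s by ring,
    show r₁ * r₂ / (4 * s) = r₁ / 2 * (r₂ / 2) / s by ring]
  generalize r₁ / 2 = a
  generalize r₂ / 2 = b
  simp only [weberTerm, neg_div', div_pow]
  field_simp
  ring

theorem weber_second_exponential_integral_general (s r₁ r₂ : ℝ) (hs : 0 < s) (ν : ℕ) :
    (∫ l in Set.Ioi (0 : ℝ),
        Real.exp (-s * l ^ 2) * besselJ ν (l * r₁) * besselJ ν (l * r₂) * l) =
      1 / (2 * s) * Real.exp (-(r₁ ^ 2 + r₂ ^ 2) / (4 * s)) *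
        besselI ν (r₁ * r₂ / (2 * s)) := by
  have hcoeff := besselJ_coeff_mul_moment_eq_weberTerm ν hs.ne' r₁ r₂
  have hsum : Summable fun p : ℕ × ℕ => ‖1 / (2 * s) * (r₁ * r₂ / (4 * s)) ^ ν *
      weberTerm ν (-(r₁ ^ 2 / (4 * s))) (-(r₂ ^ 2 / (4 * s))) p‖ := by
    simpa only [norm_mul] using (summable_norm_weberTerm ν _ _).mul_left _
  simp_rw [exp_mul_besselJ_mul_besselJ_mul_eq_tsum]
  refine (integral_tsum_mul_exp_neg_mul_sq_mul_pow_odd hs _ (fun p : ℕ × ℕ => ν + p.1 + p.2)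
    (by simpa only [hcoeff] using hsum)).trans ?_
  simp_rw [hcoeff]
  rw [tsum_mul_left, (hasSum_weberTerm ν _ _).tsum_eq, besselI_natCast,
    show r₁ * r₂ / (2 * s) / 2 = r₁ * r₂ / (4 * s) by ring,
    show -(r₁ ^ 2 / (4 * s)) * -(r₂ ^ 2 / (4 * s)) = (r₁ * r₂ / (4 * s)) ^ 2 by ring,
    show -(r₁ ^ 2 + r₂ ^ 2) / (4 * s) = -(r₁ ^ 2 / (4 * s)) + -(r₂ ^ 2 / (4 * s)) by ring,
    exp_add]
  ring

/-- Weber's second exponential integral: for `s > 0`, `r₁, r₂ > 0` and integer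
order `ν ≥ 0`,
`∫_0^∞ e^{-sλ²} J_ν(λr₁) J_ν(λr₂) λ dλ = (1/(2s)) e^{-(r₁²+r₂²)/(4s)} I_ν(r₁r₂/(2s))`. -/
theorem weber_second_exponential_integral (s r₁ r₂ : ℝ) (hs : 0 < s)
    (hr₁ : 0 < r₁) (hr₂ : 0 < r₂) (ν : ℕ) :
    (∫ l in Set.Ioi (0 : ℝ),
        Real.exp (-s * l ^ 2) * besselJ ν (l * r₁) * besselJ ν (l * r₂) * l) =
      1 / (2 * s) * Real.exp (-(r₁ ^ 2 + r₂ ^ 2) / (4 * s)) *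
        besselI ν (r₁ * r₂ / (2 * s)) :=
  weber_second_exponential_integral_general s r₁ r₂ hs ν
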